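/- Let G = (V, E) be a connected graph and let uu', vv' ∈ E be two edges with u, u', v, v' pairwise distinct. Then the intersection inequality x_{uv} + x_{u'v'} ≤ x_{uv'} + x_{vu'} is valid for LMC(G) (multicuts of the complete graph lifted from G) if and only if {u, v'} is a vu'-separating node set and {v, u'} is a uv'-separating node set in G. -/

import Mathlib

open Finset

open scoped Classical

variable {V : Type*}

/-- A decomposition of a graph `G`: a partition of the node set all of whose blocks
induce connected subgraphs. -/
def IsDecomposition (G : SimpleGraph V) (P : Set (Set V)) : Prop :=
  Setoid.IsPartition P ∧ ∀ U ∈ P, (G.induce U).Connected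

/-- Two nodes lie in a common block of `P`. -/
def SameBlock (P : Set (Set V)) (u v : V) : Prop :=
  ∃ U ∈ P, u ∈ U ∧ v ∈ U

/-- The edge `e` straddles two distinct blocks of `P`. -/
def Crosses (P : Set (Set V)) (e : Sym2 V) : Prop :=
  ∃ u v, e = s(u, v) ∧ ¬ SameBlock P u v

/-- The multicut of `G` induced by a decomposition `P`. -/
def inducedMulticut (G : SimpleGraph V) (P : Set (Set V)) : Set (Sym2 V) :=
  {e | e ∈ G.edgeSet ∧ Crosses P e}

/-- `M` is a multicut of `G`. -/
def IsMulticut (G : SimpleGraph V) (M : Set (Sym2 V)) : Prop :=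
  ∃ P, IsDecomposition G P ∧ M = inducedMulticut G P

/-- The characteristic vector (in the ambient space `Sym2 V → ℝ`, with coordinates
outside the edge set of `H` pinned to `0`) of the multicut of `H` induced by `P`. -/
noncomputable def multicutVec (H : SimpleGraph V) (P : Set (Set V)) : Sym2 V → ℝ :=
  fun e => if e ∈ H.edgeSet ∧ Crosses P e then 1 else 0

/-- Characteristic vectors of multicuts of `H` lifted from `G`. -/
def liftedVectors (G H : SimpleGraph V) : Set (Sym2 V → ℝ) :=
  {x | ∃ P, IsDecomposition G P ∧ x = multicutVec H P}

/-- The lifted multicut polytope with respect to `G` and `H`. -/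
def LMC (G H : SimpleGraph V) : Set (Sym2 V → ℝ) :=
  convexHull ℝ (liftedVectors G H)

/-- The inequality `f x ≤ b` is valid for `P` and its equality set has affine dimension
`|E ∪ F| - 1`, i.e. one less than the dimension of the corresponding lifted multicut
polytope for the augmented graph `H`. -/
def DefinesFacet (H : SimpleGraph V) (P : Set (Sym2 V → ℝ))
    (f : (Sym2 V → ℝ) → ℝ) (b : ℝ) : Prop :=
  (∀ x ∈ P, f x ≤ b) ∧
  Module.finrank ℝ (affineSpan ℝ {x | x ∈ P ∧ f x = b}).direction + 1 = Nat.card H.edgeSet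

/-- `S` separates `a` from `b` in `G`: every `a b`-path meets `S`. -/
def IsSeparating {V : Type*} (G : SimpleGraph V) (a b : V) (S : Set V) : Prop :=
  ∀ p : G.Walk a b, p.IsPath → ∃ w ∈ S, w ∈ p.support

/-!
Both sides of the inequality are read off which of the pairs `uv`, `u'v'`, `uv'`, `vu'` share a
block. If the separation conditions hold and `u, v'` share a block, then a path inside that block
meets `v` or `u'`, so `uv` or `u'v'` shares a block as well; symmetrically for `v, u'`, and if
both do, all four nodes lie in one block. Conversely, a path from `v` to `u'` avoiding `u, v'`
lets `v, u'` share a block of the decomposition into the components of `G - {u, v'}` and the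
singletons `{u}`, `{v'}`, which violates the inequality.
-/

open SimpleGraph

lemma SameBlock.symm {P : Set (Set V)} {a b : V} (h : SameBlock P a b) : SameBlock P b a :=
  let ⟨U, hU, ha, hb⟩ := h; ⟨U, hU, hb, ha⟩

lemma Setoid.IsPartition.sameBlock_trans {P : Set (Set V)} (hP : Setoid.IsPartition P)
    {a b c : V} (hab : SameBlock P a b) (hbc : SameBlock P b c) : SameBlock P a c := by
  obtain ⟨U, hU, ha, hb⟩ := hab
  obtain ⟨W, hW, hb', hc⟩ := hbc
  obtain ⟨B, -, hB⟩ := hP.2 b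
  have hUW : U = W := (hB U ⟨hU, hb⟩).trans (hB W ⟨hW, hb'⟩).symm
  exact ⟨U, hU, ha, hUW ▸ hc⟩

lemma crosses_mk_iff {P : Set (Set V)} {a b : V} : Crosses P s(a, b) ↔ ¬ SameBlock P a b := by
  refine ⟨?_, fun h => ⟨a, b, rfl, h⟩⟩
  rintro ⟨x, y, hxy, h⟩
  rcases Sym2.eq_iff.mp hxy with ⟨rfl, rfl⟩ | ⟨rfl, rfl⟩
  · exact h
  · exact fun hab => h hab.symm

lemma multicutVec_top_mk (P : Set (Set V)) {a b : V} (hab : a ≠ b) :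
    multicutVec ⊤ P s(a, b) = if SameBlock P a b then 0 else 1 := by
  by_cases h : SameBlock P a b <;> simp [multicutVec, crosses_mk_iff, h, hab]

section Sufficiency

variable {G : SimpleGraph V} {P : Set (Set V)}

lemma IsDecomposition.exists_walk_support_subset (hP : IsDecomposition G P) {U : Set V}
    (hU : U ∈ P) {a b : V} (ha : a ∈ U) (hb : b ∈ U) :
    ∃ p : G.Walk a b, ∀ w ∈ p.support, w ∈ U := by
  obtain ⟨q⟩ := (hP.2 U hU).preconnected ⟨a, ha⟩ ⟨b, hb⟩
  refine ⟨q.map (Embedding.induce U).toHom, fun w hw => ?_⟩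
  obtain ⟨x, -, rfl⟩ := List.mem_map.mp (q.support_map (Embedding.induce U).toHom ▸ hw)
  exact x.2

lemma IsDecomposition.exists_sameBlock_of_isSeparating (hP : IsDecomposition G P)
    {a b : V} {S : Set V} (hab : SameBlock P a b) (hS : IsSeparating G a b S) :
    ∃ s ∈ S, SameBlock P a s ∧ SameBlock P s b := by
  obtain ⟨U, hU, ha, hb⟩ := hab
  obtain ⟨p, hpU⟩ := hP.exists_walk_support_subset hU ha hb
  obtain ⟨s, hsS, hsp⟩ := hS p.toPath.1 p.toPath.2
  have hsU : s ∈ U := hpU s (Walk.support_toPath_subset_support p hsp)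
  exact ⟨s, hsS, ⟨U, hU, ha, hsU⟩, ⟨U, hU, hsU, hb⟩⟩

lemma multicutVec_intersection_le (hP : IsDecomposition G P) {u u' v v' : V}
    (hsep_vu' : IsSeparating G v u' {u, v'}) (hsep_uv' : IsSeparating G u v' {v, u'})
    (h_uv : u ≠ v) (h_uv' : u ≠ v') (h_u'v : u' ≠ v) (h_u'v' : u' ≠ v') :
    multicutVec ⊤ P s(u, v) + multicutVec ⊤ P s(u', v') ≤
      multicutVec ⊤ P s(u, v') + multicutVec ⊤ P s(v, u') := by
  have hC : SameBlock P u v' → SameBlock P u v ∨ SameBlock P u' v' := fun h => by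
    obtain ⟨s, hs | hs, hus, hsv'⟩ := hP.exists_sameBlock_of_isSeparating h hsep_uv' <;> subst hs
    exacts [.inl hus, .inr hsv']
  have hD : SameBlock P v u' → SameBlock P u v ∨ SameBlock P u' v' := fun h => by
    obtain ⟨s, hs | hs, hvs, hsu'⟩ := hP.exists_sameBlock_of_isSeparating h hsep_vu' <;> subst hs
    exacts [.inl hvs.symm, .inr hsu'.symm]
  have hCD : SameBlock P u v' → SameBlock P v u' → SameBlock P u v ∧ SameBlock P u' v' := by
    intro h_C h_D
    have trans := @hP.1.sameBlock_trans
    rcases hC h_C with h_A | h_B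
    · exact ⟨h_A, trans h_D.symm (trans h_A.symm h_C)⟩
    · exact ⟨trans h_C (trans h_B.symm h_D.symm), h_B⟩
  rw [multicutVec_top_mk P h_uv, multicutVec_top_mk P h_u'v', multicutVec_top_mk P h_uv',
    multicutVec_top_mk P h_u'v.symm]
  split_ifs <;> norm_num <;> tauto

end Sufficiency

lemma convex_setOf_add_le_add {ι : Type*} (a b c d : ι) :
    Convex ℝ {x : ι → ℝ | x a + x b ≤ x c + x d} := by
  intro y hy z hz s t hs ht _
  simp only [Set.mem_ofPred_eq, Pi.add_apply, Pi.smul_apply, smul_eq_mul] at *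
  linarith [mul_le_mul_of_nonneg_left hy hs, mul_le_mul_of_nonneg_left hz ht]

section Necessity

def edgesAvoiding (G : SimpleGraph V) (S : Set V) : SimpleGraph V where
  Adj a b := G.Adj a b ∧ a ∉ S ∧ b ∉ S
  symm.symm _ _ h := ⟨h.1.symm, h.2.2, h.2.1⟩
  loopless.irrefl _ h := h.1.ne rfl

variable (G : SimpleGraph V) (S : Set V)

lemma edgesAvoiding_le : edgesAvoiding G S ≤ G := fun _ _ h => h.1

lemma isDecomposition_classes_edgesAvoiding :
    IsDecomposition G (edgesAvoiding G S).reachableSetoid.classes := by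
  refine ⟨Setoid.isPartition_classes _, ?_⟩
  rintro _ ⟨y, rfl⟩
  have hsupp : {x | (edgesAvoiding G S).reachableSetoid x y} =
      ((edgesAvoiding G S).connectedComponentMk y).supp := by
    ext x
    exact ConnectedComponent.eq.symm
  rw [hsupp]
  exact (ConnectedComponent.connected_toSimpleGraph _).mono fun _ _ h => edgesAvoiding_le G S h

variable {G S}

lemma sameBlock_classes_edgesAvoiding {a b : V} :
    SameBlock (edgesAvoiding G S).reachableSetoid.classes a b ↔
      (edgesAvoiding G S).Reachable a b :=
  (Setoid.rel_iff_exists_classes _).symm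

lemma SimpleGraph.Walk.reachable_edgesAvoiding {a b : V} (p : G.Walk a b)
    (hp : ∀ w ∈ p.support, w ∉ S) :
    (edgesAvoiding G S).Reachable a b := by
  refine ⟨p.transfer _ fun e he => ?_⟩
  induction e using Sym2.ind with
  | h x y =>
    exact ⟨p.adj_of_mem_edges he, hp x (p.fst_mem_support_of_mem_edges he),
      hp y (p.snd_mem_support_of_mem_edges he)⟩

lemma eq_of_reachable_edgesAvoiding {a b : V} (ha : a ∈ S)
    (h : (edgesAvoiding G S).Reachable a b) : a = b := by
  obtain ⟨_ | ⟨hadj, _⟩⟩ := h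
  · rfl
  · exact absurd ha hadj.2.1

lemma isSeparating_of_intersection_le {u u' v v' : V}
    (hval : ∀ x ∈ liftedVectors G ⊤, x s(u, v) + x s(u', v') ≤ x s(u, v') + x s(v, u'))
    (h_uv : u ≠ v) (h_uv' : u ≠ v') (h_u'v : u' ≠ v) (h_u'v' : u' ≠ v') :
    IsSeparating G v u' {u, v'} := by
  intro p _
  by_contra! hp
  set P := (edgesAvoiding G {u, v'}).reachableSetoid.classes
  have hcut : ∀ a ∈ ({u, v'} : Set V), ∀ b, a ≠ b → ¬ SameBlock P a b := fun a ha b hab h =>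
    hab (eq_of_reachable_edgesAvoiding ha (sameBlock_classes_edgesAvoiding.mp h))
  have h_vu' : SameBlock P v u' := sameBlock_classes_edgesAvoiding.mpr <|
    p.reachable_edgesAvoiding fun w hw hwS => hp w hwS hw
  have h := hval _ ⟨P, isDecomposition_classes_edgesAvoiding G _, rfl⟩
  rw [multicutVec_top_mk P h_uv, multicutVec_top_mk P h_u'v', multicutVec_top_mk P h_uv',
    multicutVec_top_mk P h_u'v.symm, if_pos h_vu', if_neg (hcut u (by simp) v h_uv),
    if_neg (hcut u (by simp) v' h_uv'), if_neg fun h => hcut v' (by simp) u' h_u'v'.symm h.symm]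
    at h
  norm_num at h

end Necessity

theorem intersection_inequality_valid_iff_general
    {V : Type*} (G : SimpleGraph V)
    (u u' v v' : V)
    (hd : List.Pairwise (· ≠ ·) [u, u', v, v']) :
    (∀ x ∈ LMC G ⊤, x s(u, v) + x s(u', v') ≤ x s(u, v') + x s(v, u')) ↔
      (IsSeparating G v u' {u, v'} ∧ IsSeparating G u v' {v, u'}) := by
  simp only [List.pairwise_cons, List.mem_cons, List.not_mem_nil, or_false, forall_eq_or_imp,
    forall_eq, List.Pairwise.nil, and_true, IsEmpty.forall_iff, implies_true] at hd
  obtain ⟨⟨-, h_uv, h_uv'⟩, ⟨h_u'v, h_u'v'⟩, -⟩ := hd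
  constructor
  · intro hval
    have hgen : ∀ x ∈ liftedVectors G ⊤, x s(u, v) + x s(u', v') ≤ x s(u, v') + x s(v, u') :=
      fun x hx => hval x (subset_convexHull ℝ _ hx)
    -- the second condition is the first one for the edges `vv'` and `uu'`
    have hgen' : ∀ x ∈ liftedVectors G ⊤, x s(v, u) + x s(v', u') ≤ x s(v, u') + x s(u, v') :=
      fun x hx => by rw [Sym2.eq_swap (a := v), Sym2.eq_swap (a := v')]; linarith [hgen x hx]
    exact ⟨isSeparating_of_intersection_le hgen h_uv h_uv' h_u'v h_u'v',
      isSeparating_of_intersection_le hgen' h_uv.symm h_u'v.symm h_uv'.symm h_u'v'.symm⟩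
  · rintro ⟨hsep_vu', hsep_uv'⟩ x hx
    refine convexHull_min ?_ (convex_setOf_add_le_add _ _ _ _) hx
    rintro _ ⟨P, hP, rfl⟩
    exact multicutVec_intersection_le hP hsep_vu' hsep_uv' h_uv h_uv' h_u'v h_u'v'

/-- for edges `uu'` and `vv'` of a connected graph `G` with `u,u',v,v'`
pairwise distinct, the intersection inequality `x_{uv} + x_{u'v'} ≤ x_{uv'} + x_{vu'}`
is valid for `LMC(G)` iff `{u,v'}` is `vu'`-separating and `{v,u'}` is
`uv'`-separating. -/
theorem intersection_inequality_valid_iff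
    {V : Type*} [Fintype V] (G : SimpleGraph V) (hG : G.Connected)
    (u u' v v' : V) (huu' : G.Adj u u') (hvv' : G.Adj v v')
    (hd : List.Pairwise (· ≠ ·) [u, u', v, v']) :
    (∀ x ∈ LMC G ⊤, x s(u, v) + x s(u', v') ≤ x s(u, v') + x s(v, u')) ↔
      (IsSeparating G v u' {u, v'} ∧ IsSeparating G u v' {v, u'}) :=
  intersection_inequality_valid_iff_general G u u' v v' hd
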